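/- arXiv:math/0612559 — 4 statements merged into one kernel-verified Lean document; each statement's English description precedes it below -/
import Mathlib

section
/- Let Δ be an irreducible crystallographic root system with inner product normalized so that (α∨, α∨) = 2 for every long root α, and let Q∨ be the lattice generated by all coroots β∨, β ∈ Δ. Then every element h ∈ Q∨ with (h, h) = 2 is the coroot of some long root of Δ. -/
open RealInnerProductSpace

/-- A (crystallographic) root system in a real inner product space: a finite set of
nonzero vectors, closed under negation and under the reflections it defines, with
integral Cartan numbers. -/
structure IsRootSystem {V : Type*} [NormedAddCommGroup V] [InnerProductSpace ℝ V]
    (Δ : Set V) : Prop where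
  finite : Δ.Finite
  zero_not_mem : (0 : V) ∉ Δ
  neg_mem : ∀ α ∈ Δ, -α ∈ Δ
  reflect_mem : ∀ α ∈ Δ, ∀ β ∈ Δ, β - (2 * ⟪α, β⟫ / ⟪α, α⟫) • α ∈ Δ
  crystallographic : ∀ α ∈ Δ, ∀ β ∈ Δ, ∃ m : ℤ, 2 * ⟪α, β⟫ / ⟪α, α⟫ = (m : ℝ)

variable {V : Type*} [NormedAddCommGroup V] [InnerProductSpace ℝ V]

/-- The coroot of a root: `α∨ = 2α/(α,α)`. -/
noncomputable def coroot (α : V) : V := (2 / ⟪α, α⟫) • α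

/-- A root is long if it has maximal length in the root system. -/
def IsLongRoot (Δ : Set V) (α : V) : Prop := α ∈ Δ ∧ ∀ β ∈ Δ, ⟪β, β⟫ ≤ ⟪α, α⟫

/-- A root system is irreducible if it is nonempty and cannot be split into two
mutually orthogonal parts. -/
def RootSystemIsIrreducible (Δ : Set V) : Prop :=
  Δ.Nonempty ∧ ∀ Δ₁ Δ₂ : Set V, Δ = Δ₁ ∪ Δ₂ →
    (∀ α ∈ Δ₁, ∀ β ∈ Δ₂, ⟪α, β⟫ = 0) → Δ₁ = ∅ ∨ Δ₂ = ∅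

/- ### Auxiliary lemmas -/

lemma root_inner_self_pos {Δ : Set V} (hΔ : IsRootSystem Δ) {α : V} (hα : α ∈ Δ) :
    0 < ⟪α, α⟫ :=
  lt_of_le_of_ne real_inner_self_nonneg
    (fun e => hΔ.zero_not_mem ((inner_self_eq_zero (𝕜 := ℝ)).mp e.symm ▸ hα))

lemma coroot_inner_self {β : V} (hβ : ⟪β, β⟫ ≠ 0) :
    ⟪coroot β, coroot β⟫ = 4 / ⟪β, β⟫ := by
  simp only [coroot, real_inner_smul_left, real_inner_smul_right]
  field_simp
  ring

lemma coroot_inner_coroot (α β : V) :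
    ⟪coroot α, coroot β⟫ = 2 / ⟪α, α⟫ * (2 / ⟪β, β⟫) * ⟪α, β⟫ := by
  simp only [coroot, real_inner_smul_left, real_inner_smul_right]
  ring

lemma exists_long_root {Δ : Set V} (hΔ : IsRootSystem Δ) (hne : Δ.Nonempty) :
    ∃ α : V, IsLongRoot Δ α := by
  obtain ⟨a, ha, hmax⟩ := Set.exists_max_image Δ (fun β => ⟪β, β⟫) hΔ.finite hne
  exact ⟨a, ha, hmax⟩

lemma coroot_neg (α : V) : coroot (-α) = -coroot α := by
  simp [coroot, inner_neg_neg]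

lemma neg_mem_coroots {Δ : Set V} (hΔ : IsRootSystem Δ) {x : V}
    (hx : x ∈ coroot '' Δ) : -x ∈ coroot '' Δ := by
  obtain ⟨α, hα, rfl⟩ := hx
  exact ⟨-α, hΔ.neg_mem α hα, coroot_neg α⟩

/-- Dual Cartan integrality. -/
lemma coroot_cartan_int {Δ : Set V} (hΔ : IsRootSystem Δ) {α β : V}
    (hα : α ∈ Δ) (hβ : β ∈ Δ) :
    ∃ m : ℤ, 2 * ⟪coroot α, coroot β⟫ / ⟪coroot β, coroot β⟫ = (m : ℝ) := by
  obtain ⟨m, hm⟩ := hΔ.crystallographic α hα β hβ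
  refine ⟨m, ?_⟩
  have ha := (root_inner_self_pos hΔ hα).ne'
  have hb := (root_inner_self_pos hΔ hβ).ne'
  rw [coroot_inner_coroot, coroot_inner_self hb, ← hm]
  field_simp
  ring

/-- The set of coroots is closed under the reflections it defines. -/
lemma coroot_reflect_mem {Δ : Set V} (hΔ : IsRootSystem Δ) {γ δ : V}
    (hγ : γ ∈ Δ) (hδ : δ ∈ Δ) :
    coroot δ - (2 * ⟪coroot γ, coroot δ⟫ / ⟪coroot γ, coroot γ⟫) • coroot γ
      ∈ coroot '' Δ := by
  have hg := (root_inner_self_pos hΔ hγ).ne'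
  have hd := (root_inner_self_pos hΔ hδ).ne'
  set c : ℝ := 2 * ⟪γ, δ⟫ / ⟪γ, γ⟫ with hc
  have hρ : δ - c • γ ∈ Δ := hΔ.reflect_mem γ hγ δ hδ
  refine ⟨δ - c • γ, hρ, ?_⟩
  have hρρ : ⟪δ - c • γ, δ - c • γ⟫ = ⟪δ, δ⟫ := by
    simp only [inner_sub_left, inner_sub_right, real_inner_smul_left,
      real_inner_smul_right, hc]
    rw [real_inner_comm γ δ]
    field_simp
    ring
  simp only [coroot, hρρ, real_inner_smul_left, real_inner_smul_right, smul_smul,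
    smul_sub]
  congr 1
  congr 1
  rw [hc]
  field_simp

lemma neg_list_sum (l : List V) : (l.map Neg.neg).sum = -l.sum := by
  induction l with
  | nil => simp
  | cons a t iht => simp [iht, neg_add, add_comm]

lemma list_sum_nonpos (l : List ℝ) (h : ∀ x ∈ l, x ≤ 0) : l.sum ≤ 0 := by
  induction l with
  | nil => simp
  | cons a t iht =>
      rw [List.sum_cons]
      have := iht (fun x hx => h x (List.mem_cons_of_mem a hx))
      have := h a (List.mem_cons_self)
      linarith

lemma exists_list_of_mem_closure {S : Set V} (hneg : ∀ x ∈ S, -x ∈ S) {h : V}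
    (hmem : h ∈ AddSubgroup.closure S) :
    ∃ l : List V, (∀ x ∈ l, x ∈ S) ∧ l.sum = h := by
  induction hmem using AddSubgroup.closure_induction with
  | mem x hx => exact ⟨[x], by simp [hx]⟩
  | zero => exact ⟨[], by simp⟩
  | add x y _ _ ihx ihy =>
      obtain ⟨lx, hlx, hsx⟩ := ihx
      obtain ⟨ly, hly, hsy⟩ := ihy
      refine ⟨lx ++ ly, ?_, by simp [hsx, hsy]⟩
      intro z hz
      rcases List.mem_append.mp hz with h' | h'
      · exact hlx z h'
      · exact hly z h'
  | neg x _ ih =>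
      obtain ⟨l, hl, hs⟩ := ih
      refine ⟨l.map Neg.neg, ?_, ?_⟩
      · intro z hz
        obtain ⟨w, hw, rfl⟩ := List.mem_map.mp hz
        exact hneg w (hl w hw)
      · rw [neg_list_sum, hs]

lemma cartan_int_list {Δ : Set V} (hΔ : IsRootSystem Δ) {γ : V} (hγ : γ ∈ Δ)
    (l : List V) (hl : ∀ x ∈ l, x ∈ coroot '' Δ) :
    ∃ m : ℤ, 2 * ⟪l.sum, coroot γ⟫ / ⟪coroot γ, coroot γ⟫ = (m : ℝ) := by
  induction l with
  | nil => exact ⟨0, by simp⟩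
  | cons a t iht =>
      obtain ⟨m₁, hm₁⟩ := iht (fun x hx => hl x (List.mem_cons_of_mem a hx))
      obtain ⟨β, hβ, hβe⟩ := hl a (List.mem_cons_self)
      obtain ⟨m₂, hm₂⟩ := coroot_cartan_int hΔ hβ hγ
      refine ⟨m₂ + m₁, ?_⟩
      rw [List.sum_cons, inner_add_left]
      push_cast
      rw [← hm₁, ← hm₂, hβe]
      ring

lemma inner_list_sum (h : V) (l : List V) :
    ⟪h, l.sum⟫ = (l.map fun x => ⟪h, x⟫).sum := by
  induction l with
  | nil => simp
  | cons a t iht => simp [inner_add_right, iht]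

/-- Main lemma: a vector of squared length 2 in the coroot lattice is a coroot. -/
lemma sum_mem_coroots {Δ : Set V} (hΔ : IsRootSystem Δ)
    (hle : ∀ β ∈ Δ, ⟪β, β⟫ ≤ 2) :
    ∀ n : ℕ, ∀ l : List V, l.length = n → (∀ x ∈ l, x ∈ coroot '' Δ) →
      ⟪l.sum, l.sum⟫ = 2 → l.sum ∈ coroot '' Δ := by
  intro n
  induction n using Nat.strong_induction_on with
  | _ n ih =>
  intro l hlen hl hsum
  classical
  set h := l.sum with hh
  -- find an element of the list with positive inner product with h
  have hex : ∃ x ∈ l, 0 < ⟪h, x⟫ := by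
    by_contra hc
    push_neg at hc
    have h1 : ⟪h, h⟫ ≤ 0 := by
      rw [hh, inner_list_sum]
      apply list_sum_nonpos
      intro a ha
      obtain ⟨x, hx, rfl⟩ := List.mem_map.mp ha
      exact hc x hx
    rw [hsum] at h1; linarith
  obtain ⟨γ, hγl, hpos⟩ := hex
  obtain ⟨γ₀, hγ₀, hγe⟩ := hl γ hγl
  -- basic facts about g := ⟪γ,γ⟫ and t := ⟪h,γ⟫
  have hg0 : 0 < ⟪γ₀, γ₀⟫ := root_inner_self_pos hΔ hγ₀
  have hgval : ⟪γ, γ⟫ = 4 / ⟪γ₀, γ₀⟫ := by rw [← hγe]; exact coroot_inner_self hg0.ne'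
  have hg2 : 2 ≤ ⟪γ, γ⟫ := by
    rw [hgval, le_div_iff₀ hg0]
    nlinarith [hle γ₀ hγ₀]
  have hgpos : 0 < ⟪γ, γ⟫ := lt_of_lt_of_le two_pos hg2
  obtain ⟨m, hm⟩ := cartan_int_list hΔ hγ₀ l hl
  rw [← hh, hγe] at hm
  -- hm : 2 * ⟪h, γ⟫ / ⟪γ, γ⟫ = m
  rw [div_eq_iff hgpos.ne'] at hm
  have hmr : 2 * ⟪h, γ⟫ = (m : ℝ) * ⟪γ, γ⟫ := hm
  have hm1 : 1 ≤ m := by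
    by_contra hcon
    push_neg at hcon
    have hm0 : m ≤ 0 := by omega
    have hm0' : (m : ℝ) ≤ 0 := by exact_mod_cast hm0
    nlinarith [mul_nonpos_of_nonpos_of_nonneg hm0' hgpos.le]
  have hCS : ⟪h, γ⟫ * ⟪h, γ⟫ ≤ 2 * ⟪γ, γ⟫ := by
    have := real_inner_mul_inner_self_le h γ
    rw [hsum] at this; linarith
  have hm2 : m ≤ 2 := by
    by_contra hcon
    push_neg at hcon
    have h3 : (3 : ℝ) ≤ (m : ℝ) := by exact_mod_cast hcon
    have h4 : ((m : ℝ) * ⟪γ, γ⟫) * ((m : ℝ) * ⟪γ, γ⟫) ≤ 8 * ⟪γ, γ⟫ := by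
      rw [← hmr]; nlinarith [hCS]
    have h5 : (3 * ⟪γ, γ⟫) * (3 * ⟪γ, γ⟫) ≤ ((m : ℝ) * ⟪γ, γ⟫) * ((m : ℝ) * ⟪γ, γ⟫) :=
      mul_self_le_mul_self (by positivity) (mul_le_mul_of_nonneg_right h3 hgpos.le)
    nlinarith [h4, h5, hg2, hgpos]
  interval_cases m
  · -- m = 1 : descend
    have ht : 2 * ⟪h, γ⟫ = ⟪γ, γ⟫ := by push_cast at hmr; linarith
    have hγlne : l ≠ [] := by rintro rfl; simp at hγl
    have hn1 : 1 ≤ n := by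
      rw [← hlen]; exact Nat.one_le_iff_ne_zero.mpr (by simpa using hγlne)
    have hperm : l.Perm (γ :: l.erase γ) := List.perm_cons_erase hγl
    have hsum' : (l.erase γ).sum = h - γ := by
      have h2 := hperm.sum_eq
      rw [List.sum_cons] at h2
      rw [hh, h2]
      abel
    have hlen' : (l.erase γ).length = n - 1 := by
      rw [List.length_erase_of_mem hγl, hlen]
    have hnorm' : ⟪(l.erase γ).sum, (l.erase γ).sum⟫ = 2 := by
      rw [hsum']
      simp only [inner_sub_left, inner_sub_right]
      have hcm : ⟪γ, h⟫ = ⟪h, γ⟫ := real_inner_comm h γ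
      linarith [hsum, ht, hcm]
    have hmem' := ih (n - 1) (by omega) (l.erase γ) hlen'
      (fun x hx => hl x (List.mem_of_mem_erase hx)) hnorm'
    rw [hsum'] at hmem'
    obtain ⟨δ, hδ, hδe⟩ := hmem'
    -- h = reflection of coroot δ in γ
    have key := coroot_reflect_mem hΔ hγ₀ hδ
    have hcoeff : 2 * ⟪coroot γ₀, coroot δ⟫ / ⟪coroot γ₀, coroot γ₀⟫ = -1 := by
      rw [hγe, hδe, inner_sub_right, div_eq_iff hgpos.ne']
      have hcm : ⟪γ, h⟫ = ⟪h, γ⟫ := real_inner_comm h γ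
      linarith [ht, hcm]
    rw [hcoeff, hδe, hγe] at key
    have : h - γ - (-1 : ℝ) • γ = h := by
      rw [neg_one_smul]; abel
    rwa [this] at key
  · -- m = 2 : h = γ
    have ht : ⟪h, γ⟫ = ⟪γ, γ⟫ := by push_cast at hmr; linarith
    have hgle : ⟪γ, γ⟫ ≤ 2 := by nlinarith
    have hgeq : ⟪γ, γ⟫ = 2 := le_antisymm hgle hg2
    have hz : ⟪h - γ, h - γ⟫ = 0 := by
      simp only [inner_sub_left, inner_sub_right]
      have hcm : ⟪γ, h⟫ = ⟪h, γ⟫ := real_inner_comm h γ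
      linarith [hsum, ht, hgeq, hcm]
    have : h = γ := by
      have := (inner_self_eq_zero (𝕜 := ℝ)).mp hz
      rw [sub_eq_zero] at this; exact this
    rw [this]
    exact ⟨γ₀, hγ₀, hγe⟩

/-- In an irreducible crystallographic root system, normalized so that `(α∨,α∨) = 2` for
long roots `α`, every vector of squared length 2 in the coroot lattice is the coroot of a
long root. -/
theorem eq_coroot_of_norm_sq_two_mem_coroot_lattice
    {Δ : Set V} (hΔ : IsRootSystem Δ) (hirr : RootSystemIsIrreducible Δ)
    (hnorm : ∀ α : V, IsLongRoot Δ α → ⟪coroot α, coroot α⟫ = 2)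
    {h : V} (hmem : h ∈ AddSubgroup.closure (coroot '' Δ))
    (hlen : ⟪h, h⟫ = 2) :
    ∃ α : V, IsLongRoot Δ α ∧ h = coroot α := by
  obtain ⟨α₀, hα₀⟩ := exists_long_root hΔ hirr.1
  have hα₀pos := root_inner_self_pos hΔ hα₀.1
  have hα₀2 : ⟪α₀, α₀⟫ = 2 := by
    have := hnorm α₀ hα₀
    rw [coroot_inner_self hα₀pos.ne'] at this
    field_simp at this
    linarith
  have hle : ∀ β ∈ Δ, ⟪β, β⟫ ≤ 2 := fun β hβ => hα₀2 ▸ hα₀.2 β hβ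
  obtain ⟨l, hl, hsl⟩ := exists_list_of_mem_closure (fun x hx => neg_mem_coroots hΔ hx) hmem
  have hmain := sum_mem_coroots hΔ hle l.length l rfl hl (by rw [hsl]; exact hlen)
  rw [hsl] at hmain
  obtain ⟨β, hβ, hβe⟩ := hmain
  have hβpos := root_inner_self_pos hΔ hβ
  have hβ2 : ⟪β, β⟫ = 2 := by
    have h2 : ⟪coroot β, coroot β⟫ = 2 := by rw [hβe, hlen]
    rw [coroot_inner_self hβpos.ne'] at h2
    field_simp at h2
    linarith
  exact ⟨β, ⟨hβ, fun δ hδ => by rw [hβ2]; exact hle δ hδ⟩, hβe.symm⟩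
end

section
/- Let h be a finite-dimensional complex simple Lie algebra, s ⊆ h a subalgebra isomorphic to sl₂ with standard basis (e, h₀, f), and V a finite-dimensional h-module such that, as s-modules, V ≅ V^s ⊕ (h/s) ⊕ ℂ² ⊕ ℂ². Then the index of V satisfies l_h(V) = 1 − 4/(i(s,h) · k_h), where k_h = tr_h((α∨)²) for a long root α of h (trace in the adjoint representation) and i(s,h) = tr_h(h₀²)/k_h is the Dynkin index of s in h. -/
section helpers

open LinearMap Module

private lemma trace_prod_decomp {P Q : Type*} [AddCommGroup P] [Module ℂ P]
    [AddCommGroup Q] [Module ℂ Q] [FiniteDimensional ℂ P] [FiniteDimensional ℂ Q]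
    (φ : (P × Q) →ₗ[ℂ] (P × Q)) :
    trace ℂ (P × Q) φ = trace ℂ P (fst ℂ P Q ∘ₗ φ ∘ₗ inl ℂ P Q)
      + trace ℂ Q (snd ℂ P Q ∘ₗ φ ∘ₗ inr ℂ P Q) := by
  have h : φ = (inl ℂ P Q ∘ₗ (fst ℂ P Q ∘ₗ φ)) + (inr ℂ P Q ∘ₗ (snd ℂ P Q ∘ₗ φ)) := by
    ext x <;> simp
  conv_lhs => rw [h]
  rw [map_add]
  congr 1
  · rw [trace_comp_comm' (f := fst ℂ P Q ∘ₗ φ) (g := inl ℂ P Q), comp_assoc]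
  · rw [trace_comp_comm' (f := snd ℂ P Q ∘ₗ φ) (g := inr ℂ P Q), comp_assoc]

private lemma trace_restrict_add_trace_mapQ {M : Type*} [AddCommGroup M] [Module ℂ M]
    [FiniteDimensional ℂ M] (p : Submodule ℂ M) (A : M →ₗ[ℂ] M) (hA : ∀ x ∈ p, A x ∈ p) :
    trace ℂ M A = trace ℂ p (A.restrict hA)
      + trace ℂ (M ⧸ p) (Submodule.mapQ p p A hA) := by
  obtain ⟨q, hq⟩ := Submodule.exists_isCompl p
  let E : (p × q) ≃ₗ[ℂ] M := Submodule.prodEquivOfIsCompl p q hq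
  have h1 : trace ℂ M A = trace ℂ (p × q) (E.symm.conj A) := (trace_conj' A E.symm).symm
  rw [h1, trace_prod_decomp]
  congr 1
  · have : fst ℂ p q ∘ₗ (E.symm.conj A) ∘ₗ inl ℂ p q = A.restrict hA := by
      apply LinearMap.ext; intro x
      apply Subtype.ext
      have hEx : E (x, 0) = (x : M) := by
        simp [E, Submodule.coe_prodEquivOfIsCompl']
      simp only [coe_comp, Function.comp_apply, inl_apply, LinearEquiv.conj_apply_apply,
        fst_apply, restrict_coe_apply, LinearEquiv.symm_symm]
      rw [hEx]
      have : E.symm (A x) = (Submodule.projectionOnto p q hq (A x),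
          Submodule.projectionOnto q p hq.symm (A x)) := by
        apply E.injective
        simp [E, Submodule.coe_prodEquivOfIsCompl',
          Submodule.projection_add_projection_eq_self]
      rw [this]
      exact congrArg Subtype.val (Submodule.projectionOnto_apply_left hq ⟨A x, hA x x.2⟩)
    rw [this]
  · have h2 : trace ℂ (M ⧸ p) (Submodule.mapQ p p A hA)
        = trace ℂ q ((Submodule.quotientEquivOfIsCompl p q hq).conj (Submodule.mapQ p p A hA)) :=
      (trace_conj' _ _).symm
    rw [h2]
    congr 1
    apply LinearMap.ext; intro x
    have hEx : E (0, x) = (x : M) := by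
      simp [E, Submodule.coe_prodEquivOfIsCompl']
    have hsymm : E.symm (A x) = (Submodule.projectionOnto p q hq (A x),
        Submodule.projectionOnto q p hq.symm (A x)) := by
      apply E.injective
      simp [E, Submodule.coe_prodEquivOfIsCompl',
        Submodule.projection_add_projection_eq_self]
    have hmk : (Submodule.Quotient.mk (A (x : M)) : M ⧸ p)
        = Submodule.Quotient.mk ((Submodule.projectionOnto q p hq.symm (A x) : M)) := by
      rw [Submodule.Quotient.eq]
      have hsum := Submodule.projection_add_projection_eq_self hq (A x)
      have h3 : A (x : M) - (Submodule.projectionOnto q p hq.symm (A x) : M)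
          = (Submodule.projectionOnto p q hq (A x) : M) :=
        sub_eq_iff_eq_add.mpr hsum.symm
      rw [h3]; exact (Submodule.projectionOnto p q hq (A x)).2
    have hrhs : (snd ℂ p q ∘ₗ (E.symm.conj A) ∘ₗ inr ℂ p q) x
        = Submodule.projectionOnto q p hq.symm (A x) := by
      simp only [coe_comp, Function.comp_apply, inr_apply, LinearEquiv.conj_apply_apply,
        snd_apply, LinearEquiv.symm_symm]
      rw [hEx, hsymm]
    rw [hrhs]; symm
    calc (Submodule.quotientEquivOfIsCompl p q hq).conj (Submodule.mapQ p p A hA) x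
        = (Submodule.quotientEquivOfIsCompl p q hq)
            (Submodule.mapQ p p A hA (Submodule.Quotient.mk (x : M))) := by
          rw [LinearEquiv.conj_apply_apply,
            Submodule.quotientEquivOfIsCompl_symm_apply]
      _ = (Submodule.quotientEquivOfIsCompl p q hq)
            (Submodule.Quotient.mk (A (x : M))) := by rw [Submodule.mapQ_apply]
      _ = Submodule.projectionOnto q p hq.symm (A x) := by
          rw [hmk, Submodule.quotientEquivOfIsCompl_apply_mk_coe]

private lemma trace_ad_sq_ne_zero {L : Type*} [LieRing L] [LieAlgebra ℂ L]
    [FiniteDimensional ℂ L] (e h₀ f : L) (he0 : e ≠ 0) (hh0 : h₀ ≠ 0)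
    (rel₁ : ⁅h₀, e⁆ = (2 : ℂ) • e) (rel₂ : ⁅h₀, f⁆ = (-2 : ℂ) • f) (rel₃ : ⁅e, f⁆ = h₀) :
    LinearMap.trace ℂ L ((LieAlgebra.ad ℂ L h₀) ∘ₗ (LieAlgebra.ad ℂ L h₀)) ≠ 0 := by
  set g : Module.End ℂ L := LieAlgebra.ad ℂ L h₀ with hg
  have hgapp : ∀ y : L, g y = ⁅h₀, y⁆ := fun y => rfl
  -- e is an eigenvector with eigenvalue 2
  have he2 : e ∈ g.maxGenEigenspace 2 := by
    rw [Module.End.mem_maxGenEigenspace]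
    exact ⟨1, by simp [hgapp, rel₁]⟩
  -- the sl2 triple
  have t : IsSl2Triple h₀ e f :=
    ⟨hh0, rel₃, by rw [rel₁, ← Nat.cast_smul_eq_nsmul ℂ]; norm_num,
      by rw [rel₂, ← Nat.cast_smul_eq_nsmul ℂ]; push_cast; module⟩
  -- independence and finiteness of eigenvalues
  have hindep := Module.End.independent_maxGenEigenspace g
  have hfin : {μ : ℂ | g.maxGenEigenspace μ ≠ ⊥}.Finite :=
    WellFoundedGT.finite_ne_bot_of_iSupIndep hindep
  have hds : DirectSum.IsInternal (fun μ : ℂ => g.maxGenEigenspace μ) :=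
    DirectSum.isInternal_submodule_of_iSupIndep_of_iSup_eq_top hindep
      (Module.End.iSup_maxGenEigenspace_eq_top g)
  have hmaps : ∀ μ : ℂ, Set.MapsTo g (g.maxGenEigenspace μ) (g.maxGenEigenspace μ) :=
    fun μ => Module.End.mapsTo_maxGenEigenspace_of_comm (Commute.refl g) μ
  have hmaps2 : ∀ μ : ℂ, Set.MapsTo (g ∘ₗ g) (g.maxGenEigenspace μ) (g.maxGenEigenspace μ) :=
    fun μ => (hmaps μ).comp (hmaps μ)
  -- trace decomposition
  rw [trace_eq_sum_trace_restrict' hds hfin hmaps2]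
  -- value of the trace on each generalized eigenspace
  have key : ∀ μ : ℂ, trace ℂ (g.maxGenEigenspace μ) ((g ∘ₗ g).restrict (hmaps2 μ))
      = μ ^ 2 * (finrank ℂ (g.maxGenEigenspace μ) : ℂ) := by
    intro μ
    set Eμ := g.maxGenEigenspace μ
    set Rg : Module.End ℂ Eμ := g.restrict (hmaps μ) with hRg
    have hcomp : (g ∘ₗ g).restrict (hmaps2 μ) = Rg ∘ₗ Rg := LinearMap.restrict_comp _ _ _
    set N : Module.End ℂ Eμ :=
      (g - algebraMap ℂ (Module.End ℂ L) μ).restrict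
        (Module.End.mapsTo_maxGenEigenspace_of_comm
          (Algebra.mul_sub_algebraMap_commutes g μ) μ) with hN
    have hNnil : IsNilpotent N :=
      Module.End.isNilpotent_restrict_maxGenEigenspace_sub_algebraMap g μ
    set c : Module.End ℂ Eμ := algebraMap ℂ (Module.End ℂ Eμ) μ with hc
    have hRN : Rg = N + c := by
      apply LinearMap.ext; intro x; apply Subtype.ext
      show g (x : L) = _
      have h1 : ((N + c) x : L) = (g (x : L) - μ • (x : L)) + μ • (x : L) := by
        simp only [LinearMap.add_apply, Submodule.coe_add, hN, hc, restrict_coe_apply,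
          LinearMap.sub_apply, Module.algebraMap_end_apply, SetLike.val_smul]
        rfl
      rw [h1, sub_add_cancel]
    have htrN : trace ℂ Eμ N = 0 := by
      have := LinearMap.isNilpotent_trace_of_isNilpotent hNnil
      exact this.eq_zero
    rw [hcomp, ← Module.End.mul_eq_comp, hRN]
    have hexp : (N + c) * (N + c) = N * N + μ • N + μ • N + (μ * μ) • (1 : Module.End ℂ Eμ) := by
      rw [hc, Algebra.algebraMap_eq_smul_one]
      rw [mul_add, add_mul, add_mul]
      rw [mul_smul_comm, smul_mul_assoc, smul_mul_assoc, mul_one, one_mul, one_mul, smul_smul]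
      abel
    rw [hexp]
    have htrNN : trace ℂ Eμ (N * N) = 0 := by
      have : IsNilpotent (N * N) := (Commute.refl N).isNilpotent_mul_left hNnil
      exact (LinearMap.isNilpotent_trace_of_isNilpotent this).eq_zero
    simp only [map_add, map_smul, htrN, htrNN, smul_eq_mul, mul_zero, add_zero, zero_add,
      LinearMap.trace_one]
    rw [show trace ℂ (g.maxGenEigenspace μ) (N * N) = 0 from htrNN,
      show trace ℂ (g.maxGenEigenspace μ) N = 0 from htrN]
    ring
  -- integrality of the eigenvalues
  have hint : ∀ μ : ℂ, g.maxGenEigenspace μ ≠ ⊥ → ∃ z : ℤ, μ = (z : ℂ) := by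
    intro μ hμ
    have hraise : ∀ (ν : ℂ) (m : L), m ∈ g.maxGenEigenspace ν →
        ⁅e, m⁆ ∈ g.maxGenEigenspace (2 + ν) :=
      fun ν m hm => LieModule.lie_mem_maxGenEigenspace_toEnd he2 hm
    -- the set of chain shifts is finite
    set T : Set ℕ := {n : ℕ | g.maxGenEigenspace (μ + 2 * n) ≠ ⊥} with hT
    have hTfin : T.Finite := by
      have hinj : Set.InjOn (fun n : ℕ => μ + 2 * (n : ℂ)) T := by
        intro a _ b _ hab
        simp only at hab
        have : (a : ℂ) = b := by
          push_cast at hab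
          linear_combination hab / 2
        exact_mod_cast this
      exact Set.Finite.of_finite_image (hfin.subset (by rintro x ⟨n, hn, rfl⟩; exact hn)) hinj
    have hT0 : (0 : ℕ) ∈ T := by simpa [hT] using hμ
    have hTne : hTfin.toFinset.Nonempty := ⟨0, hTfin.mem_toFinset.mpr hT0⟩
    set n₀ : ℕ := hTfin.toFinset.max' hTne with hn₀
    have hn₀T : n₀ ∈ T := hTfin.mem_toFinset.mp (hTfin.toFinset.max'_mem hTne)
    set ν : ℂ := μ + 2 * n₀ with hν
    have hνtop : g.maxGenEigenspace (2 + ν) = ⊥ := by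
      by_contra hcon
      have : (n₀ + 1) ∈ T := by
        rw [hT]
        simp only [Set.mem_setOf_eq]
        have : μ + 2 * ((n₀ + 1 : ℕ) : ℂ) = 2 + ν := by push_cast [hν]; ring
        rw [this]
        exact hcon
      have := hTfin.toFinset.le_max' _ (hTfin.mem_toFinset.mpr this)
      omega
    -- produce a genuine eigenvector killed by e
    obtain ⟨m, hmE, hm0⟩ := (Submodule.ne_bot_iff _).mp hn₀T
    rw [Module.End.mem_maxGenEigenspace] at hmE
    have hex : ∃ k : ℕ, ((g - ν • (1 : Module.End ℂ L)) ^ k) m = 0 := hmE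
    classical
    set k₀ := Nat.find hex with hk₀
    have hk₀spec := Nat.find_spec hex
    have hk₀pos : 0 < k₀ := by
      rcases Nat.eq_zero_or_pos k₀ with h | h
      · exfalso; apply hm0
        have h2 := hk₀spec
        rw [← hk₀, h, pow_zero] at h2
        simpa using h2
      · exact h
    set m' : L := ((g - ν • (1 : Module.End ℂ L)) ^ (k₀ - 1)) m with hm'
    have hm'0 : m' ≠ 0 := Nat.find_min hex (Nat.sub_lt hk₀pos Nat.one_pos)
    have hm'eig : (g - ν • (1 : Module.End ℂ L)) m' = 0 := by
      rw [hm', ← Module.End.mul_apply, ← pow_succ']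
      have h3 : k₀ - 1 + 1 = k₀ := Nat.succ_pred_eq_of_pos hk₀pos
      rw [h3, hk₀]
      exact hk₀spec
    have hlieh : ⁅h₀, m'⁆ = ν • m' := by
      have := hm'eig
      simp only [LinearMap.sub_apply, LinearMap.smul_apply, Module.End.one_apply,
        sub_eq_zero] at this
      rw [← hgapp]; exact this
    have hm'mem : m' ∈ g.maxGenEigenspace ν := by
      rw [Module.End.mem_maxGenEigenspace]
      exact ⟨1, by simpa using hm'eig⟩
    have hliee : ⁅e, m'⁆ = 0 := by
      have := hraise ν m' hm'mem
      rw [hνtop] at this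
      simpa using this
    have P : t.HasPrimitiveVectorWith m' ν := ⟨hm'0, hlieh, hliee⟩
    obtain ⟨n, hn⟩ := P.exists_nat
    refine ⟨(n : ℤ) - 2 * (n₀ : ℤ), ?_⟩
    have : μ = ν - 2 * n₀ := by rw [hν]; ring
    rw [this, hn]; push_cast; ring
  -- now conclude positivity
  have htwo : (2 : ℂ) ∈ hfin.toFinset := by
    rw [Set.Finite.mem_toFinset]
    intro hbot
    rw [Submodule.eq_bot_iff] at hbot
    exact he0 (hbot e he2)
  intro hzero
  have hre : (∑ μ ∈ hfin.toFinset,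
      trace ℂ (g.maxGenEigenspace μ) ((g ∘ₗ g).restrict (hmaps2 μ))).re = 0 := by
    rw [hzero]; rfl
  rw [Complex.re_sum] at hre
  have hterm : ∀ μ ∈ hfin.toFinset,
      0 ≤ (trace ℂ (g.maxGenEigenspace μ) ((g ∘ₗ g).restrict (hmaps2 μ))).re := by
    intro μ hμ
    obtain ⟨z, hz⟩ := hint μ (hfin.mem_toFinset.mp hμ)
    rw [key μ, hz]
    have : ((z : ℂ)) ^ 2 * ((finrank ℂ (g.maxGenEigenspace (z : ℂ)) : ℂ))
        = (((z ^ 2 * finrank ℂ (g.maxGenEigenspace (z : ℂ)) : ℤ) : ℂ)) := by push_cast; ring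
    rw [this, Complex.intCast_re]
    positivity
  have hpos : 0 < (trace ℂ (g.maxGenEigenspace 2) ((g ∘ₗ g).restrict (hmaps2 2))).re := by
    rw [key 2]
    have hfr : 0 < finrank ℂ (g.maxGenEigenspace 2) := by
      apply finrank_pos_iff.mpr
      exact nontrivial_of_ne ⟨e, he2⟩ 0 (by simp [Subtype.ext_iff, he0])
    have : ((2 : ℂ)) ^ 2 * ((finrank ℂ (g.maxGenEigenspace 2) : ℂ))
        = (((4 * finrank ℂ (g.maxGenEigenspace 2) : ℤ) : ℂ)) := by push_cast; ring
    rw [this, Complex.intCast_re]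
    have : (0 : ℤ) < 4 * finrank ℂ (g.maxGenEigenspace 2) := by positivity
    exact_mod_cast this
  have := Finset.sum_pos' hterm ⟨2, htwo, hpos⟩
  rw [hre] at this
  exact lt_irrefl 0 this

end helpers



/-- The submodule of `s`-invariant vectors of a module `V` over a Lie algebra `L`,
for a Lie subalgebra `s ⊆ L`. -/
def sInvariants {L : Type*} [LieRing L] [LieAlgebra ℂ L] (s : LieSubalgebra ℂ L)
    (V : Type*) [AddCommGroup V] [Module ℂ V] [LieRingModule L V] [LieModule ℂ L V] :
    Submodule ℂ V where
  carrier := {v | ∀ x ∈ s, ⁅x, v⁆ = 0}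
  add_mem' := by intro a b ha hb x hx; rw [lie_add, ha x hx, hb x hx, add_zero]
  zero_mem' := fun x _ => lie_zero x
  smul_mem' := by intro c a ha x hx; rw [lie_smul, ha x hx, smul_zero]

/-- The action of an element `x` of a Lie subalgebra `s ⊆ L` on the quotient `L/s`,
induced by the adjoint action. -/
noncomputable def adQuot {L : Type*} [LieRing L] [LieAlgebra ℂ L]
    (s : LieSubalgebra ℂ L) {x : L} (hx : x ∈ s) :
    (L ⧸ s.toSubmodule) →ₗ[ℂ] (L ⧸ s.toSubmodule) :=
  Submodule.mapQ s.toSubmodule s.toSubmodule (LieAlgebra.ad ℂ L x)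
    (by intro y hy; exact s.lie_mem hx hy)

private lemma adQuot_congr {L : Type*} [LieRing L] [LieAlgebra ℂ L]
    (s : LieSubalgebra ℂ L) {x y : L} (hxy : x = y) (hx : x ∈ s) (hy : y ∈ s) :
    adQuot s hx = adQuot s hy := by subst hxy; rfl


open LinearMap Module in
/-- Let `L` be a finite-dimensional complex simple Lie algebra, `s ⊆ L` a subalgebra
isomorphic to `sl₂` with standard basis `(e, h₀, f)`, and `V` a finite-dimensional
`L`-module which, as an `s`-module, is isomorphic to `V^s ⊕ (L/s) ⊕ ℂ² ⊕ ℂ²`.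
Let `k = k_L = tr_L((α∨)²)` (trace in the adjoint representation, for a long root `α`;
here `k` is an abstract nonzero constant), let `i = tr_L(h₀²)/k` be the Dynkin index of
`s` in `L`, and let `l` be the index of `V`, i.e. the ratio `tr_V(xy)/tr_L(xy)` (for any
`x, y` with `tr_L(xy) ≠ 0`). Then `l = 1 - 4/(i·k)`. -/
theorem index_of_module_of_sl2_decomposition
    {L : Type*} [LieRing L] [LieAlgebra ℂ L] [FiniteDimensional ℂ L]
    [LieAlgebra.IsSimple ℂ L]
    (s : LieSubalgebra ℂ L) (e h₀ f : L)
    (he : e ∈ s) (hh : h₀ ∈ s) (hf : f ∈ s)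
    (hspan : s.toSubmodule = Submodule.span ℂ {e, h₀, f})
    (hind : LinearIndependent ℂ ![e, h₀, f])
    (rel₁ : ⁅h₀, e⁆ = (2 : ℂ) • e) (rel₂ : ⁅h₀, f⁆ = (-2 : ℂ) • f) (rel₃ : ⁅e, f⁆ = h₀)
    (V : Type*) [AddCommGroup V] [Module ℂ V] [LieRingModule L V] [LieModule ℂ L V]
    [FiniteDimensional ℂ V]
    (φ : V ≃ₗ[ℂ] (sInvariants s V × (L ⧸ s.toSubmodule) × (ℂ × ℂ) × (ℂ × ℂ)))
    (hφ : ∀ (a b c : ℂ) (v : V),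
      φ ⁅a • e + b • h₀ + c • f, v⁆ =
        (0,
         adQuot s (s.add_mem (s.add_mem (s.smul_mem a he) (s.smul_mem b hh))
           (s.smul_mem c hf)) ((φ v).2.1),
         (b * (φ v).2.2.1.1 + a * (φ v).2.2.1.2, c * (φ v).2.2.1.1 - b * (φ v).2.2.1.2),
         (b * (φ v).2.2.2.1 + a * (φ v).2.2.2.2, c * (φ v).2.2.2.1 - b * (φ v).2.2.2.2)))
    (l k i : ℂ) (hk : k ≠ 0)
    (hl : ∀ x y : L,
      LinearMap.trace ℂ L ((LieAlgebra.ad ℂ L x) ∘ₗ (LieAlgebra.ad ℂ L y)) ≠ 0 →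
      l * LinearMap.trace ℂ L ((LieAlgebra.ad ℂ L x) ∘ₗ (LieAlgebra.ad ℂ L y))
        = LinearMap.trace ℂ V ((LieModule.toEnd ℂ L V x) ∘ₗ (LieModule.toEnd ℂ L V y)))
    (hi : i * k
        = LinearMap.trace ℂ L ((LieAlgebra.ad ℂ L h₀) ∘ₗ (LieAlgebra.ad ℂ L h₀))) :
    l = 1 - 4 / (i * k) := by
  classical
  have he0 : e ≠ 0 := by
    have := hind.ne_zero 0; simpa using this
  have hh0 : h₀ ≠ 0 := by
    have := hind.ne_zero 1; simpa using this
  set g : Module.End ℂ L := LieAlgebra.ad ℂ L h₀ with hgdef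
  have htr_ne : LinearMap.trace ℂ L (g ∘ₗ g) ≠ 0 :=
    trace_ad_sq_ne_zero e h₀ f he0 hh0 rel₁ rel₂ rel₃
  have hik : i * k ≠ 0 := by rw [hi]; exact htr_ne
  have hlh := hl h₀ h₀ htr_ne
  rw [← hi] at hlh
  -- Step 1: the action of h₀ through φ
  set A : (L ⧸ s.toSubmodule) →ₗ[ℂ] (L ⧸ s.toSubmodule) := adQuot s hh with hAdef
  have hv : ∀ v : V, φ ⁅h₀, v⁆ =
      (0, A ((φ v).2.1), ((φ v).2.2.1.1, -(φ v).2.2.1.2),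
        ((φ v).2.2.2.1, -(φ v).2.2.2.2)) := by
    intro v
    have hsimp : (0:ℂ) • e + (1:ℂ) • h₀ + (0:ℂ) • f = h₀ := by module
    have h := hφ 0 1 0 v
    rw [adQuot_congr s hsimp
      (s.add_mem (s.add_mem (s.smul_mem 0 he) (s.smul_mem 1 hh)) (s.smul_mem 0 hf)) hh] at h
    rw [hsimp] at h
    simpa using h
  -- Step 2: trace over V
  set P := (sInvariants s V × (L ⧸ s.toSubmodule) × (ℂ × ℂ) × (ℂ × ℂ)) with hP
  have hT : φ.conj ((LieModule.toEnd ℂ L V h₀) ∘ₗ (LieModule.toEnd ℂ L V h₀))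
      = LinearMap.prodMap 0 (LinearMap.prodMap (A ∘ₗ A)
          (LinearMap.prodMap (LinearMap.id) (LinearMap.id))) := by
    apply LinearMap.ext; intro p
    have h1 := hv (φ.symm p)
    have h2 := hv ⁅h₀, φ.symm p⁆
    rw [LinearEquiv.apply_symm_apply] at h1
    simp only [LinearEquiv.conj_apply_apply, LinearMap.coe_comp, Function.comp_apply,
      LieModule.toEnd_apply_apply]
    rw [h2, h1]
    simp [Prod.ext_iff]
  have hQ4 : LinearMap.trace ℂ V ((LieModule.toEnd ℂ L V h₀) ∘ₗ (LieModule.toEnd ℂ L V h₀))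
      = LinearMap.trace ℂ (L ⧸ s.toSubmodule) (A ∘ₗ A) + 4 := by
    rw [← LinearMap.trace_conj' _ φ, hT]
    rw [LinearMap.trace_prodMap', LinearMap.trace_prodMap', LinearMap.trace_prodMap']
    have hid : LinearMap.trace ℂ (ℂ × ℂ) (LinearMap.id) = 2 := by
      rw [← Module.End.one_eq_id, LinearMap.trace_one]
      norm_num
    rw [hid]
    simp only [map_zero]
    ring
  -- Step 3: trace over L decomposes
  have hinv : ∀ x ∈ s.toSubmodule, (g ∘ₗ g) x ∈ s.toSubmodule := by
    intro x hx
    exact s.lie_mem hh (s.lie_mem hh hx)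
  have hLdec := trace_restrict_add_trace_mapQ s.toSubmodule (g ∘ₗ g) hinv
  have hmapQ : Submodule.mapQ s.toSubmodule s.toSubmodule (g ∘ₗ g) hinv = A ∘ₗ A := by
    apply Submodule.linearMap_qext
    apply LinearMap.ext; intro x
    simp [A, adQuot, Submodule.mapQ_apply, hgdef]
    rfl
  -- Step 4: trace of the restriction to s is 8
  have he' : e ∈ s.toSubmodule := he
  have hh' : h₀ ∈ s.toSubmodule := hh
  have hf' : f ∈ s.toSubmodule := hf
  set v : Fin 3 → s.toSubmodule := ![⟨e, he'⟩, ⟨h₀, hh'⟩, ⟨f, hf'⟩] with hvdef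
  have hvcomp : (s.toSubmodule).subtype ∘ v = ![e, h₀, f] := by
    funext j; fin_cases j <;> rfl
  have hind' : LinearIndependent ℂ v := by
    apply LinearIndependent.of_comp (s.toSubmodule).subtype
    rw [hvcomp]; exact hind
  have hspan' : ⊤ ≤ Submodule.span ℂ (Set.range v) := by
    intro x _
    have himg : (s.toSubmodule).subtype '' Set.range v = {e, h₀, f} := by
      rw [← Set.range_comp, hvcomp]
      ext y
      simp [Matrix.range_cons, Matrix.range_empty]
      tauto
    have h1 : (x : L) ∈ Submodule.span ℂ {e, h₀, f} := by rw [← hspan]; exact x.2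
    rw [← himg, Submodule.span_image] at h1
    obtain ⟨y, hy, hyx⟩ := Submodule.mem_map.mp h1
    have : y = x := Subtype.ext hyx
    rwa [← this]
  set b : Basis (Fin 3) ℂ s.toSubmodule := Basis.mk hind' hspan' with hbdef
  set R' : Module.End ℂ s.toSubmodule := (g ∘ₗ g).restrict hinv with hR'def
  have hR0 : R' (b 0) = (4:ℂ) • b 0 := by
    apply Subtype.ext
    have hb0 : b 0 = v 0 := Basis.mk_apply hind' hspan' 0
    rw [hb0]
    show (g ∘ₗ g) e = ((4:ℂ) • (v 0) : s.toSubmodule)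
    simp only [LinearMap.coe_comp, Function.comp_apply, hgdef, LieAlgebra.ad_apply]
    rw [rel₁, lie_smul, rel₁, smul_smul]
    norm_num
    rfl
  have hR1 : R' (b 1) = 0 := by
    apply Subtype.ext
    have hb1 : b 1 = v 1 := Basis.mk_apply hind' hspan' 1
    rw [hb1]
    show (g ∘ₗ g) h₀ = (0 : L)
    simp [hgdef]
  have hR2 : R' (b 2) = (4:ℂ) • b 2 := by
    apply Subtype.ext
    have hb2 : b 2 = v 2 := Basis.mk_apply hind' hspan' 2
    rw [hb2]
    show (g ∘ₗ g) f = ((4:ℂ) • (v 2) : s.toSubmodule)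
    simp only [LinearMap.coe_comp, Function.comp_apply, hgdef, LieAlgebra.ad_apply]
    rw [rel₂, lie_smul, rel₂, smul_smul]
    norm_num
    rfl
  have htrR : LinearMap.trace ℂ s.toSubmodule R' = 8 := by
    rw [LinearMap.trace_eq_matrix_trace ℂ b, Matrix.trace, Fin.sum_univ_three]
    simp only [Matrix.diag_apply, LinearMap.toMatrix_apply, hR0, hR1, hR2, map_smul, map_zero,
      Basis.repr_self, Finsupp.smul_single, Finsupp.single_eq_same, Finsupp.coe_zero,
      Pi.zero_apply, smul_eq_mul, mul_one]
    norm_num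
  -- Combine
  have hL8Q : i * k = 8 + LinearMap.trace ℂ (L ⧸ s.toSubmodule) (A ∘ₗ A) := by
    rw [hi, hLdec, hmapQ, htrR]
  have hfinal : l * (i * k) = i * k - 4 := by
    rw [hlh, hQ4]
    rw [hL8Q]; ring
  rw [eq_sub_iff_add_eq, add_div' _ _ _ hik, div_eq_iff hik]
  linear_combination hfinal
end

section
/- Let Γ be a subgroup of the hyperoctahedral group W(B_n) (the group of signed permutations of ℝ^n) that is generated by reflections and has no nonzero fixed vectors: (ℝ^n)^Γ = {0}. Then there is a partition I₁, …, I_k of {1, …, n} such that Γ = Γ₁ × ⋯ × Γ_k, where each Γ_j is either the full group B_{I_j} of signed permutations of the coordinates in I_j, or (when |I_j| ≥ 2) the group D_{I_j} of signed permutations of I_j with an even number of sign changes. -/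
/-- The orthogonal reflection of `ℝ^n` in the hyperplane orthogonal to `α`. -/
noncomputable def sref {n : ℕ} (α : EuclideanSpace ℝ (Fin n)) :
    EuclideanSpace ℝ (Fin n) ≃ₗᵢ[ℝ] EuclideanSpace ℝ (Fin n) :=
  Submodule.reflection ((Submodule.span ℝ {α})ᗮ)

/-- The standard basis vector `ε_i` of `ℝ^n`. -/
noncomputable def eps {n : ℕ} (i : Fin n) : EuclideanSpace ℝ (Fin n) :=
  EuclideanSpace.single i (1 : ℝ)

/-- The reflections of the hyperoctahedral group `W(B_n)`: the `s_{ε_i ± ε_j}` (`i ≠ j`)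
and the `s_{ε_i}`, restricted to indices in a subset `I`. -/
def BnReflectionsOn {n : ℕ} (I : Set (Fin n)) :
    Set (EuclideanSpace ℝ (Fin n) ≃ₗᵢ[ℝ] EuclideanSpace ℝ (Fin n)) :=
  {g | (∃ i ∈ I, ∃ j ∈ I, i ≠ j ∧
          (g = sref (eps i - eps j) ∨ g = sref (eps i + eps j))) ∨
       ∃ i ∈ I, g = sref (eps i)}

/-- The reflections `s_{ε_i ± ε_j}` (`i ≠ j`) with indices in `I`. -/
def DnReflectionsOn {n : ℕ} (I : Set (Fin n)) :
    Set (EuclideanSpace ℝ (Fin n) ≃ₗᵢ[ℝ] EuclideanSpace ℝ (Fin n)) :=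
  {g | ∃ i ∈ I, ∃ j ∈ I, i ≠ j ∧
        (g = sref (eps i - eps j) ∨ g = sref (eps i + eps j))}

/-- The group `B_I` of signed permutations of the coordinates in `I`. -/
noncomputable def BGrp {n : ℕ} (I : Set (Fin n)) :
    Subgroup (EuclideanSpace ℝ (Fin n) ≃ₗᵢ[ℝ] EuclideanSpace ℝ (Fin n)) :=
  Subgroup.closure (BnReflectionsOn I)

/-- The group `D_I` of signed permutations of the coordinates in `I` with an even number
of sign changes. -/
noncomputable def DGrp {n : ℕ} (I : Set (Fin n)) :
    Subgroup (EuclideanSpace ℝ (Fin n) ≃ₗᵢ[ℝ] EuclideanSpace ℝ (Fin n)) :=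
  Subgroup.closure (DnReflectionsOn I)

open scoped RealInnerProductSpace

namespace HyperoctAux

abbrev E (n : ℕ) := EuclideanSpace ℝ (Fin n)

variable {n : ℕ}

lemma proj_orth (α x : E n) :
    ((((Submodule.span ℝ {α})ᗮ).starProjection x : E n)) =
      x - (⟪α, x⟫ / ⟪α, α⟫) • α := by
  apply Submodule.eq_starProjection_of_mem_of_inner_eq_zero
  · rw [Submodule.mem_orthogonal_singleton_iff_inner_right]
    rw [inner_sub_right, inner_smul_right]
    rcases eq_or_ne α 0 with h | h
    · simp [h]
    · have hα : ⟪α, α⟫ ≠ 0 := inner_self_ne_zero.mpr h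
      rw [div_mul_cancel₀ _ hα, sub_self]
  · intro w hw
    rw [Submodule.mem_orthogonal_singleton_iff_inner_right] at hw
    rw [sub_sub_cancel, inner_smul_left]
    simp [hw]

lemma sref_apply (α x : E n) : sref α x = x - (2 * ⟪α, x⟫ / ⟪α, α⟫) • α := by
  unfold sref
  rw [Submodule.reflection_apply, proj_orth]
  match_scalars <;> ring

lemma sref_neg (α : E n) : sref (-α) = sref α := by
  have h : Submodule.span ℝ ({-α} : Set (E n)) = Submodule.span ℝ {α} := by
    rw [show ({-α} : Set (E n)) = {(-1 : ℝ) • α} by norm_num]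
    exact Submodule.span_singleton_smul_eq (isUnit_one.neg) α
  unfold sref
  exact congrArg (fun K : Submodule ℝ (E n) => Submodule.reflection Kᗮ) h

lemma eps_apply (i k : Fin n) : eps i k = if k = i then (1 : ℝ) else 0 :=
  EuclideanSpace.single_apply i 1 k

lemma inner_eps_left (i : Fin n) (x : E n) : ⟪eps i, x⟫ = x i := by
  simp [eps, EuclideanSpace.inner_single_left]

lemma sref_coord (α x : E n) (k : Fin n) :
    sref α x k = x k - (2 * ⟪α, x⟫ / ⟪α, α⟫) * α k := by
  rw [sref_apply]
  rw [PiLp.sub_apply, PiLp.smul_apply, smul_eq_mul]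

lemma inner_sub_eps (i j : Fin n) (x : E n) : ⟪eps i - eps j, x⟫ = x i - x j := by
  rw [inner_sub_left, inner_eps_left, inner_eps_left]

lemma inner_add_eps (i j : Fin n) (x : E n) : ⟪eps i + eps j, x⟫ = x i + x j := by
  rw [inner_add_left, inner_eps_left, inner_eps_left]

lemma sref_sub_coord {i j : Fin n} (hij : i ≠ j) (x : E n) (k : Fin n) :
    sref (eps i - eps j) x k = if k = i then x j else if k = j then x i else x k := by
  rw [sref_coord, inner_sub_eps]
  rw [show ⟪eps i - eps j, eps i - eps j⟫ = 2 by
    rw [inner_sub_eps, PiLp.sub_apply, PiLp.sub_apply, eps_apply, eps_apply, eps_apply, eps_apply]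
    simp [hij, hij.symm]
    norm_num]
  rw [PiLp.sub_apply, eps_apply, eps_apply]
  rcases eq_or_ne k i with rfl | h1
  · simp [hij]
    try ring
  · rcases eq_or_ne k j with rfl | h2
    · simp [h1]
      try ring
    · simp [h1, h2]

lemma sref_add_coord {i j : Fin n} (hij : i ≠ j) (x : E n) (k : Fin n) :
    sref (eps i + eps j) x k = if k = i then -x j else if k = j then -x i else x k := by
  rw [sref_coord, inner_add_eps]
  rw [show ⟪eps i + eps j, eps i + eps j⟫ = 2 by
    rw [inner_add_eps, PiLp.add_apply, PiLp.add_apply, eps_apply, eps_apply, eps_apply, eps_apply]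
    simp [hij, hij.symm]
    norm_num]
  rw [PiLp.add_apply, eps_apply, eps_apply]
  rcases eq_or_ne k i with rfl | h1
  · simp [hij]
    try ring
  · rcases eq_or_ne k j with rfl | h2
    · simp [h1]
      try ring
    · simp [h1, h2]

lemma sref_eps_coord (i : Fin n) (x : E n) (k : Fin n) :
    sref (eps i) x k = if k = i then -x i else x k := by
  rw [sref_coord, inner_eps_left]
  rw [show ⟪eps i, eps i⟫ = 1 by rw [inner_eps_left, eps_apply]; simp]
  rw [eps_apply]
  rcases eq_or_ne k i with rfl | h1
  · simp
    try ring
  · simp [h1]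

lemma sref_conj (g : E n ≃ₗᵢ[ℝ] E n) (β : E n) :
    g * sref β * g⁻¹ = sref (g β) := by
  apply LinearIsometryEquiv.ext
  intro x
  have h1 : ⟪g β, x⟫ = ⟪β, g.symm x⟫ := by
    conv_lhs => rw [← g.apply_symm_apply x]
    rw [g.inner_map_map]
  have h2 : ⟪g β, g β⟫ = ⟪β, β⟫ := g.inner_map_map β β
  show g ((sref β) ((g⁻¹ : E n ≃ₗᵢ[ℝ] E n) x)) = sref (g β) x
  rw [LinearIsometryEquiv.inv_def, sref_apply, sref_apply, h1, h2, map_sub,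
    LinearIsometryEquiv.map_smul, g.apply_symm_apply]

section Memb

variable {Γ : Subgroup (E n ≃ₗᵢ[ℝ] E n)}

def Ms (Γ : Subgroup (E n ≃ₗᵢ[ℝ] E n)) (i j : Fin n) : Prop := sref (eps i - eps j) ∈ Γ
def Ps (Γ : Subgroup (E n ≃ₗᵢ[ℝ] E n)) (i j : Fin n) : Prop := sref (eps i + eps j) ∈ Γ
def Ss (Γ : Subgroup (E n ≃ₗᵢ[ℝ] E n)) (i : Fin n) : Prop := sref (eps i) ∈ Γ
def RelG (Γ : Subgroup (E n ≃ₗᵢ[ℝ] E n)) (i j : Fin n) : Prop :=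
  i = j ∨ Ms Γ i j ∨ Ps Γ i j

lemma mem_conj {α β : E n} (hα : sref α ∈ Γ) (hβ : sref β ∈ Γ) :
    sref (sref α β) ∈ Γ := by
  rw [← sref_conj]
  exact mul_mem (mul_mem hα hβ) (inv_mem hα)

lemma sref_sub_comm (i j : Fin n) : sref (eps i - eps j) = sref (eps j - eps i) := by
  rw [show eps j - eps i = -(eps i - eps j) from (neg_sub _ _).symm, sref_neg]

lemma sref_add_comm (i j : Fin n) : sref (eps i + eps j) = sref (eps j + eps i) := by
  rw [add_comm]

lemma Ms_symm {i j : Fin n} (h : Ms Γ i j) : Ms Γ j i := by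
  unfold Ms at *; rwa [← sref_sub_comm]

lemma Ps_symm {i j : Fin n} (h : Ps Γ i j) : Ps Γ j i := by
  unfold Ps at *; rwa [← sref_add_comm]

-- vector computations
lemma euclid_ext {x y : E n} (h : ∀ k, x k = y k) : x = y := PiLp.ext h

lemma vc1 {i j k : Fin n} (hij : i ≠ j) (hjk : j ≠ k) (hik : i ≠ k) :
    sref (eps i - eps j) (eps j - eps k) = eps i - eps k := by
  apply euclid_ext; intro l
  rw [sref_sub_coord hij]
  rw [PiLp.sub_apply, PiLp.sub_apply, PiLp.sub_apply, PiLp.sub_apply]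
  simp only [eps_apply]
  split_ifs <;> simp_all

lemma vc2 {i j k : Fin n} (hij : i ≠ j) (hjk : j ≠ k) (hik : i ≠ k) :
    sref (eps i - eps j) (eps j + eps k) = eps i + eps k := by
  apply euclid_ext; intro l
  rw [sref_sub_coord hij]
  rw [PiLp.add_apply, PiLp.add_apply, PiLp.add_apply, PiLp.add_apply]
  simp only [eps_apply]
  split_ifs <;> simp_all

lemma vc3 {i j k : Fin n} (hij : i ≠ j) (hjk : j ≠ k) (hik : i ≠ k) :
    sref (eps i + eps j) (eps j - eps k) = -(eps i + eps k) := by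
  apply euclid_ext; intro l
  rw [sref_add_coord hij]
  rw [PiLp.neg_apply, PiLp.add_apply, PiLp.sub_apply, PiLp.sub_apply, PiLp.sub_apply]
  simp only [eps_apply]
  split_ifs <;> simp_all

lemma vc4 {i j k : Fin n} (hij : i ≠ j) (hjk : j ≠ k) (hik : i ≠ k) :
    sref (eps i + eps j) (eps j + eps k) = -(eps i - eps k) := by
  apply euclid_ext; intro l
  rw [sref_add_coord hij]
  rw [PiLp.neg_apply, PiLp.sub_apply, PiLp.add_apply, PiLp.add_apply, PiLp.add_apply]
  simp only [eps_apply]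
  split_ifs <;> simp_all

lemma vc5 {i j : Fin n} (hij : i ≠ j) : sref (eps i - eps j) (eps i) = eps j := by
  apply euclid_ext; intro l
  rw [sref_sub_coord hij]
  simp only [eps_apply]
  split_ifs <;> simp_all

lemma vc6 {i j : Fin n} (hij : i ≠ j) : sref (eps i + eps j) (eps i) = -eps j := by
  apply euclid_ext; intro l
  rw [sref_add_coord hij]
  rw [PiLp.neg_apply]
  simp only [eps_apply]
  split_ifs <;> simp_all

lemma vc7 {i j : Fin n} (hij : i ≠ j) : sref (eps i) (eps i - eps j) = -(eps i + eps j) := by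
  apply euclid_ext; intro l
  rw [sref_eps_coord]
  rw [PiLp.neg_apply, PiLp.add_apply, PiLp.sub_apply, PiLp.sub_apply]
  simp only [eps_apply]
  split_ifs <;> simp_all

lemma vc8 {i j : Fin n} (hij : i ≠ j) : sref (eps i) (eps i + eps j) = -(eps i - eps j) := by
  apply euclid_ext; intro l
  rw [sref_eps_coord]
  rw [PiLp.neg_apply, PiLp.sub_apply, PiLp.add_apply, PiLp.add_apply]
  simp only [eps_apply]
  split_ifs <;> simp_all

-- transitivity of memberships
lemma t_mm {i j k : Fin n} (hij : i ≠ j) (hjk : j ≠ k) (hik : i ≠ k)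
    (h1 : Ms Γ i j) (h2 : Ms Γ j k) : Ms Γ i k := by
  have := mem_conj h1 h2
  rwa [vc1 hij hjk hik] at this

lemma t_mp {i j k : Fin n} (hij : i ≠ j) (hjk : j ≠ k) (hik : i ≠ k)
    (h1 : Ms Γ i j) (h2 : Ps Γ j k) : Ps Γ i k := by
  have := mem_conj h1 h2
  rwa [vc2 hij hjk hik] at this

lemma t_pm {i j k : Fin n} (hij : i ≠ j) (hjk : j ≠ k) (hik : i ≠ k)
    (h1 : Ps Γ i j) (h2 : Ms Γ j k) : Ps Γ i k := by
  have := mem_conj h1 h2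
  rwa [vc3 hij hjk hik, sref_neg] at this

lemma t_pp {i j k : Fin n} (hij : i ≠ j) (hjk : j ≠ k) (hik : i ≠ k)
    (h1 : Ps Γ i j) (h2 : Ps Γ j k) : Ms Γ i k := by
  have := mem_conj h1 h2
  rwa [vc4 hij hjk hik, sref_neg] at this

lemma short_prop {i j : Fin n} (hij : i ≠ j) (hS : Ss Γ i)
    (h : Ms Γ i j ∨ Ps Γ i j) : Ss Γ j := by
  rcases h with h | h
  · have := mem_conj h hS
    rwa [vc5 hij] at this
  · have := mem_conj h hS
    rwa [vc6 hij, sref_neg] at this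

lemma short_both {i j : Fin n} (hij : i ≠ j) (hS : Ss Γ i)
    (h : Ms Γ i j ∨ Ps Γ i j) : Ms Γ i j ∧ Ps Γ i j := by
  rcases h with h | h
  · refine ⟨h, ?_⟩
    have := mem_conj hS h
    rwa [vc7 hij, sref_neg] at this
  · refine ⟨?_, h⟩
    have := mem_conj hS h
    rwa [vc8 hij, sref_neg] at this

lemma relG_refl (i : Fin n) : RelG Γ i i := Or.inl rfl

lemma relG_symm {i j : Fin n} (h : RelG Γ i j) : RelG Γ j i := by
  rcases h with rfl | h | h
  · exact Or.inl rfl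
  · exact Or.inr (Or.inl (Ms_symm h))
  · exact Or.inr (Or.inr (Ps_symm h))

lemma relG_trans {i j k : Fin n} (h1 : RelG Γ i j) (h2 : RelG Γ j k) : RelG Γ i k := by
  rcases h1 with rfl | h1
  · exact h2
  rcases h2 with rfl | h2
  · exact Or.inr h1
  rcases eq_or_ne i k with rfl | hik
  · exact Or.inl rfl
  rcases eq_or_ne i j with rfl | hij
  · exact Or.inr h2
  rcases eq_or_ne j k with rfl | hjk
  · exact Or.inr h1
  rcases h1 with h1 | h1 <;> rcases h2 with h2 | h2
  · exact Or.inr (Or.inl (t_mm hij hjk hik h1 h2))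
  · exact Or.inr (Or.inr (t_mp hij hjk hik h1 h2))
  · exact Or.inr (Or.inr (t_pm hij hjk hik h1 h2))
  · exact Or.inr (Or.inl (t_pp hij hjk hik h1 h2))


lemma fix_swap {x : E n} {a b : Fin n} (hab : a ≠ b) (hx : x a = x b) :
    sref (eps a - eps b) x = x := by
  apply euclid_ext; intro k
  rw [sref_sub_coord hab]
  rcases eq_or_ne k a with rfl | h1
  · rw [if_pos rfl]; exact hx.symm
  · rw [if_neg h1]
    rcases eq_or_ne k b with rfl | h2
    · rw [if_pos rfl]; exact hx
    · rw [if_neg h2]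

lemma fix_nswap {x : E n} {a b : Fin n} (hab : a ≠ b) (hx : x a = -x b) :
    sref (eps a + eps b) x = x := by
  apply euclid_ext; intro k
  rw [sref_add_coord hab]
  rcases eq_or_ne k a with rfl | h1
  · rw [if_pos rfl]; rw [hx]
  · rw [if_neg h1]
    rcases eq_or_ne k b with rfl | h2
    · rw [if_pos rfl]; rw [hx, neg_neg]
    · rw [if_neg h2]

lemma fix_short {x : E n} {a : Fin n} (hx : x a = 0) : sref (eps a) x = x := by
  apply euclid_ext; intro k
  rw [sref_eps_coord]
  rcases eq_or_ne k a with rfl | h1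
  · rw [if_pos rfl, hx, neg_zero]
  · rw [if_neg h1]

lemma both_step {Γ : Subgroup (E n ≃ₗᵢ[ℝ] E n)} {x y z : Fin n}
    (hxy : x ≠ y) (hzx : z ≠ x) (hzy : z ≠ y)
    (hm : Ms Γ x y) (hp : Ps Γ x y) (hrel : RelG Γ y z) :
    (Ms Γ x z ∧ Ps Γ x z) ∧ (Ms Γ y z ∧ Ps Γ y z) := by
  have hyz : y ≠ z := Ne.symm hzy
  have hxz : x ≠ z := Ne.symm hzx
  have hyx : y ≠ x := Ne.symm hxy
  rcases hrel with h | hmyz | hpyz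
  · exact absurd h hyz
  · have hMxz : Ms Γ x z := t_mm hxy hyz hxz hm hmyz
    have hPxz : Ps Γ x z := t_pm hxy hyz hxz hp hmyz
    exact ⟨⟨hMxz, hPxz⟩, hmyz, t_mp hyx hxz hyz (Ms_symm hm) hPxz⟩
  · have hMxz : Ms Γ x z := t_pp hxy hyz hxz hp hpyz
    have hPxz : Ps Γ x z := t_mp hxy hyz hxz hm hpyz
    exact ⟨⟨hMxz, hPxz⟩, t_pp hyx hxz hyz (Ps_symm hp) hPxz, hpyz⟩

lemma both_all {Γ : Subgroup (E n ≃ₗᵢ[ℝ] E n)} {J : Set (Fin n)}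
    (hall : ∀ a b : Fin n, a ∈ J → b ∈ J → RelG Γ a b)
    {a b : Fin n} (ha : a ∈ J) (hb : b ∈ J) (hab : a ≠ b)
    (hm : Ms Γ a b) (hp : Ps Γ a b) :
    ∀ p q : Fin n, p ∈ J → q ∈ J → p ≠ q → Ms Γ p q ∧ Ps Γ p q := by
  have hA : ∀ z, z ∈ J → z ≠ a → Ms Γ a z ∧ Ps Γ a z := by
    intro z hz hza
    rcases eq_or_ne z b with rfl | hzb
    · exact ⟨hm, hp⟩
    · exact (both_step hab hza hzb hm hp (hall b z hb hz)).1
  have hB : ∀ z, z ∈ J → z ≠ b → Ms Γ b z ∧ Ps Γ b z := by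
    intro z hz hzb
    rcases eq_or_ne z a with rfl | hza
    · exact ⟨Ms_symm hm, Ps_symm hp⟩
    · exact (both_step hab hza hzb hm hp (hall b z hb hz)).2
  intro p q hp' hq' hpq
  by_cases hpa : p = a
  · subst hpa
    exact hA q hq' (Ne.symm hpq)
  · by_cases hpb : p = b
    · subst hpb
      exact hB q hq' (Ne.symm hpq)
    · have hap := hA p hp' hpa
      by_cases hqa : q = a
      · subst hqa
        exact ⟨Ms_symm hap.1, Ps_symm hap.2⟩
      · by_cases hqb : q = b
        · subst hqb
          have hbp := hB p hp' hpb
          exact ⟨Ms_symm hbp.1, Ps_symm hbp.2⟩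
        · exact (both_step (Ne.symm hpa) hqa (Ne.symm hpq) hap.1 hap.2
            (hall p q hp' hq')).2

lemma no_fix {Γ : Subgroup (E n ≃ₗᵢ[ℝ] E n)}
    (hrefl : Γ = Subgroup.closure {g ∈ BnReflectionsOn (Set.univ : Set (Fin n)) | g ∈ Γ})
    (J : Set (Fin n)) (i0 : Fin n) (hi0 : i0 ∈ J)
    (hcl : ∀ a b : Fin n, a ∈ J → RelG Γ a b → b ∈ J)
    (hall : ∀ a b : Fin n, a ∈ J → b ∈ J → RelG Γ a b)
    (hns : ∀ a, a ∈ J → ¬ Ss Γ a)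
    (hnb : ∀ a b : Fin n, a ∈ J → b ∈ J → a ≠ b → ¬ (Ms Γ a b ∧ Ps Γ a b)) :
    ∃ v : E n, v ≠ 0 ∧ ∀ g ∈ Γ, g v = v := by
  classical
  let c : Fin n → ℝ := fun a => if a = i0 then 1 else if Ms Γ i0 a then 1 else -1
  have hc1 : c i0 = 1 := if_pos rfl
  have hcM : ∀ a, a ≠ i0 → Ms Γ i0 a → c a = 1 := by
    intro a h hm
    show (if a = i0 then (1:ℝ) else if Ms Γ i0 a then 1 else -1) = 1
    rw [if_neg h, if_pos hm]
  have hcP : ∀ a, a ∈ J → a ≠ i0 → Ps Γ i0 a → c a = -1 := by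
    intro a ha h hp
    have hnm : ¬ Ms Γ i0 a := fun hm => hnb i0 a hi0 ha (Ne.symm h) ⟨hm, hp⟩
    show (if a = i0 then (1:ℝ) else if Ms Γ i0 a then 1 else -1) = -1
    rw [if_neg h, if_neg hnm]
  have hcc : ∀ a b : Fin n, a ∈ J → b ∈ J → a ≠ b →
      (Ms Γ a b → c a = c b) ∧ (Ps Γ a b → c a = -c b) := by
    intro a b ha hb hab
    rcases eq_or_ne a i0 with rfl | hai
    · constructor
      · intro h
        rw [hc1, hcM b (Ne.symm hab) h]
      · intro h
        rw [hc1, hcP b hb (Ne.symm hab) h]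
        norm_num
    · rcases eq_or_ne b i0 with rfl | hbi
      · constructor
        · intro h
          rw [hcM a (hab) (Ms_symm h), hc1]
        · intro h
          rw [hcP a ha (hab) (Ps_symm h), hc1]
      · rcases hall i0 a hi0 ha with h | hM | hP
        · exact absurd h.symm hai
        · have hca : c a = 1 := hcM a hai hM
          constructor
          · intro h
            rw [hca, hcM b hbi (t_mm (Ne.symm hai) hab (Ne.symm hbi) hM h)]
          · intro h
            rw [hca, hcP b hb hbi (t_mp (Ne.symm hai) hab (Ne.symm hbi) hM h)]
            norm_num
        · have hca : c a = -1 := hcP a ha hai hP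
          constructor
          · intro h
            rw [hca, hcP b hb hbi (t_pm (Ne.symm hai) hab (Ne.symm hbi) hP h)]
          · intro h
            rw [hca, hcM b hbi (t_pp (Ne.symm hai) hab (Ne.symm hbi) hP h)]
  let v : E n := WithLp.toLp 2 (fun a => if a ∈ J then c a else 0)
  have hva : ∀ a, v a = if a ∈ J then c a else 0 := fun _ => rfl
  refine ⟨v, ?_, ?_⟩
  · intro h0
    have h1 : v i0 = 1 := by rw [hva i0, if_pos hi0, hc1]
    rw [h0] at h1
    rw [PiLp.zero_apply] at h1
    exact zero_ne_one h1
  · intro g hg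
    rw [hrefl] at hg
    refine Subgroup.closure_induction (fun x hx => ?_) rfl
      (fun x y _ _ ihx ihy => ?_) (fun x _ ih => ?_) hg
    · obtain ⟨hB, hxΓ⟩ := hx
      rcases hB with ⟨a, -, b, -, hab, hcase⟩ | ⟨a, -, hcase⟩
      · rcases hcase with rfl | rfl
        · -- minus root
          by_cases haJ : a ∈ J
          · have hbJ : b ∈ J := hcl a b haJ (Or.inr (Or.inl hxΓ))
            refine fix_swap hab ?_
            rw [hva a, hva b, if_pos haJ, if_pos hbJ]
            exact (hcc a b haJ hbJ hab).1 hxΓ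
          · have hbJ : b ∉ J := fun hb =>
              haJ (hcl b a hb (Or.inr (Or.inl (Ms_symm hxΓ))))
            refine fix_swap hab ?_
            rw [hva a, hva b, if_neg haJ, if_neg hbJ]
        · -- plus root
          by_cases haJ : a ∈ J
          · have hbJ : b ∈ J := hcl a b haJ (Or.inr (Or.inr hxΓ))
            refine fix_nswap hab ?_
            rw [hva a, hva b, if_pos haJ, if_pos hbJ]
            exact (hcc a b haJ hbJ hab).2 hxΓ
          · have hbJ : b ∉ J := fun hb =>
              haJ (hcl b a hb (Or.inr (Or.inr (Ps_symm hxΓ))))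
            refine fix_nswap hab ?_
            rw [hva a, hva b, if_neg haJ, if_neg hbJ, neg_zero]
      · subst hcase
        have haJ : a ∉ J := fun ha => hns a ha hxΓ
        refine fix_short ?_
        rw [hva a, if_neg haJ]
    · show x (y v) = v
      rw [ihy]
      exact ihx
    · show x⁻¹ v = v
      rw [LinearIsometryEquiv.inv_def]
      conv_lhs => rw [← ih]
      exact x.symm_apply_apply v

lemma rel_partition (r : Fin n → Fin n → Prop) (hr : Equivalence r) :
    ∃ (k : ℕ) (I : Fin k → Set (Fin n)),
      (∀ j, (I j).Nonempty) ∧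
      (Pairwise fun j j' => Disjoint (I j) (I j')) ∧
      (⋃ j, I j) = Set.univ ∧
      (∀ j i, i ∈ I j → I j = {b | r i b}) := by
  classical
  let s : Setoid (Fin n) := ⟨r, hr⟩
  haveI : Fintype (Quotient s) := Fintype.ofFinite _
  let e : Fin (Fintype.card (Quotient s)) ≃ Quotient s := (Fintype.equivFin (Quotient s)).symm
  refine ⟨Fintype.card (Quotient s), fun j => {i | Quotient.mk s i = e j}, ?_, ?_, ?_, ?_⟩
  · intro j
    obtain ⟨i, hi⟩ := Quotient.exists_rep (e j)
    exact ⟨i, hi⟩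
  · intro j j' hne
    rw [Set.disjoint_left]
    intro i hi hi'
    exact hne (e.injective ((hi.symm.trans hi')))
  · ext i
    simp only [Set.mem_iUnion, Set.mem_univ, iff_true]
    exact ⟨e.symm (Quotient.mk s i), (e.apply_symm_apply _).symm⟩
  · intro j i hi
    ext b
    simp only [Set.mem_setOf_eq]
    constructor
    · intro hb
      have : Quotient.mk s b = Quotient.mk s i := hb.trans hi.symm
      exact hr.symm (Quotient.exact this)
    · intro hrib
      have : Quotient.mk s b = Quotient.mk s i := Quotient.sound (hr.symm hrib)
      rw [this, hi]

end Memb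

end HyperoctAux


open HyperoctAux in
/-- A reflection subgroup `Γ` of the hyperoctahedral group `W(B_n)` with no nonzero fixed
vectors is a direct product `Γ = Γ₁ × ⋯ × Γ_k` along a partition `I₁, …, I_k` of
`{1, …, n}`, with each `Γ_j` equal to `B_{I_j}`, or to `D_{I_j}` when `|I_j| ≥ 2`. -/
theorem reflection_subgroup_of_hyperoctahedral_eq_prod (n : ℕ)
    (Γ : Subgroup (EuclideanSpace ℝ (Fin n) ≃ₗᵢ[ℝ] EuclideanSpace ℝ (Fin n)))
    (hrefl : Γ = Subgroup.closure {g ∈ BnReflectionsOn (Set.univ : Set (Fin n)) | g ∈ Γ})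
    (hfix : ∀ v : EuclideanSpace ℝ (Fin n), (∀ g ∈ Γ, g v = v) → v = 0) :
    ∃ (k : ℕ) (I : Fin k → Set (Fin n)),
      (∀ j, (I j).Nonempty) ∧
      (Pairwise fun j j' => Disjoint (I j) (I j')) ∧
      (⋃ j, I j) = Set.univ ∧
      ∃ G : Fin k → Subgroup (EuclideanSpace ℝ (Fin n) ≃ₗᵢ[ℝ] EuclideanSpace ℝ (Fin n)),
        (∀ j, G j = BGrp (I j) ∨ (2 ≤ (I j).ncard ∧ G j = DGrp (I j))) ∧
        Γ = ⨆ j, G j := by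
  classical
  have hequiv : Equivalence (RelG Γ) :=
    ⟨relG_refl, relG_symm, relG_trans⟩
  obtain ⟨k, I, hne, hdisj, huniv, hclass⟩ := rel_partition (RelG Γ) hequiv
  have hall2 : ∀ j a b, a ∈ I j → b ∈ I j → RelG Γ a b := by
    intro j a b ha hb
    have h := hclass j a ha
    rw [h] at hb
    exact hb
  have hcl2 : ∀ j, ∀ a b : Fin n, a ∈ I j → RelG Γ a b → b ∈ I j := by
    intro j a b ha hr
    rw [hclass j a ha]
    exact hr
  have hclassof : ∀ i : Fin n, ∃ j, i ∈ I j := by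
    intro i
    have : i ∈ ⋃ j, I j := by rw [huniv]; trivial
    exact Set.mem_iUnion.mp this
  have hpair : ∀ j, ¬(∃ i ∈ I j, Ss Γ i) →
      ∃ a b : Fin n, a ∈ I j ∧ b ∈ I j ∧ a ≠ b ∧ Ms Γ a b ∧ Ps Γ a b := by
    intro j hshort
    by_contra hno
    push_neg at hno
    obtain ⟨i0, hi0⟩ := hne j
    obtain ⟨v, hv0, hvfix⟩ := no_fix hrefl (I j) i0 hi0 (hcl2 j) (hall2 j)
      (fun a ha hS => hshort ⟨a, ha, hS⟩)
      (fun a b ha hb hab hmp => hno a b ha hb hab hmp.1 hmp.2)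
    exact hv0 (hfix v hvfix)
  have hbothall : ∀ j, ¬(∃ i ∈ I j, Ss Γ i) →
      ∀ p q : Fin n, p ∈ I j → q ∈ I j → p ≠ q → Ms Γ p q ∧ Ps Γ p q := by
    intro j hshort
    obtain ⟨a, b, ha, hb, hab, hm, hp⟩ := hpair j hshort
    exact both_all (hall2 j) ha hb hab hm hp
  refine ⟨k, I, hne, hdisj, huniv,
    fun j => if (∃ i ∈ I j, Ss Γ i) then BGrp (I j) else DGrp (I j), ?_, ?_⟩
  · intro j
    by_cases hshort : ∃ i ∈ I j, Ss Γ i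
    · left
      simp only [if_pos hshort]
    · right
      obtain ⟨a, b, ha, hb, hab, hm, hp⟩ := hpair j hshort
      constructor
      · exact (Set.one_lt_ncard (Set.toFinite _)).mpr ⟨a, ha, b, hb, hab⟩
      · simp only [if_neg hshort]
  · apply le_antisymm
    · conv_lhs => rw [hrefl]
      refine (Subgroup.closure_le _).mpr ?_
      rintro g ⟨hB, hgΓ⟩
      rw [SetLike.mem_coe]
      rcases hB with ⟨i, -, j', -, hij, hcase⟩ | ⟨i, -, hcase⟩
      · obtain ⟨jc, hijc⟩ := hclassof i
        have hrel : RelG Γ i j' := by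
          rcases hcase with h | h
          · exact Or.inr (Or.inl (show sref _ ∈ Γ by rw [← h]; exact hgΓ))
          · exact Or.inr (Or.inr (show sref _ ∈ Γ by rw [← h]; exact hgΓ))
        have hj'c : j' ∈ I jc := hcl2 jc i j' hijc hrel
        refine Subgroup.mem_iSup_of_mem jc ?_
        by_cases hshort : ∃ a ∈ I jc, Ss Γ a
        · simp only [if_pos hshort]
          exact Subgroup.subset_closure (Or.inl ⟨i, hijc, j', hj'c, hij, hcase⟩)
        · simp only [if_neg hshort]
          exact Subgroup.subset_closure ⟨i, hijc, j', hj'c, hij, hcase⟩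
      · obtain ⟨jc, hijc⟩ := hclassof i
        refine Subgroup.mem_iSup_of_mem jc ?_
        have hshort : ∃ a ∈ I jc, Ss Γ a := ⟨i, hijc, show sref _ ∈ Γ by rw [← hcase]; exact hgΓ⟩
        simp only [if_pos hshort]
        exact Subgroup.subset_closure (Or.inr ⟨i, hijc, hcase⟩)
    · refine iSup_le fun j => ?_
      by_cases hshort : ∃ i ∈ I j, Ss Γ i
      · simp only [if_pos hshort]
        obtain ⟨i1, hi1, hS1⟩ := hshort
        have hallS : ∀ a, a ∈ I j → Ss Γ a := by
          intro a ha
          rcases eq_or_ne a i1 with rfl | hne1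
          · exact hS1
          · rcases hall2 j i1 a hi1 ha with h | h
            · exact absurd h.symm hne1
            · exact short_prop (Ne.symm hne1) hS1 h
        unfold BGrp
        refine (Subgroup.closure_le _).mpr ?_
        rintro g (⟨a, ha, b, hb, hab, hcase⟩ | ⟨a, ha, hcase⟩)
        · have hrel : Ms Γ a b ∨ Ps Γ a b := by
            rcases hall2 j a b ha hb with h | h
            · exact absurd h hab
            · exact h
          have hbo := short_both hab (hallS a ha) hrel
          rw [SetLike.mem_coe]
          rcases hcase with rfl | rfl
          · exact hbo.1
          · exact hbo.2
        · rw [SetLike.mem_coe]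
          subst hcase
          exact hallS a ha
      · simp only [if_neg hshort]
        unfold DGrp
        refine (Subgroup.closure_le _).mpr ?_
        rintro g ⟨a, ha, b, hb, hab, hcase⟩
        have hbo := hbothall j hshort a b ha hb hab
        rw [SetLike.mem_coe]
        rcases hcase with rfl | rfl
        · exact hbo.1
        · exact hbo.2
end

section
/- Let g₁ ⊆ g₂ ⊆ g₃ be finite-dimensional complex Lie algebras with g₁ and g₃ simple and g₂ semisimple with decomposition g₂ = g₂¹ ⊕ ⋯ ⊕ g₂^k into simple ideals. Let ι_i denote the composition of the inclusion g₁ ↪ g₂ with the projection g₂ → g₂^i. Then the Dynkin indices satisfy i(g₁, g₃) = Σ_{i=1}^k i(ι_i(g₁), g₂^i) · i(g₂^i, g₃), where a summand is interpreted as 0 when ι_i(g₁) = 0. -/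
open Finset

/-- Additivity of the Dynkin index: if `g₁ ⊆ g₂ ⊆ g₃` with `g₁, g₃` simple and
`g₂ = g₂¹ ⊕ ⋯ ⊕ g₂^k` semisimple with simple ideals `g₂^i` (with projections `π i`),
then `i(g₁, g₃) = Σᵢ i(ιᵢ(g₁), g₂^i) · i(g₂^i, g₃)`, where `ιᵢ` is the composition of the
inclusion `g₁ ↪ g₂` with the projection onto `g₂^i`, and a summand is `0` when
`ιᵢ(g₁) = 0`.  The indices are characterized via invariant symmetric bilinear forms
(normalized invariant forms on each simple algebra): `i(h, g)` is the scalar with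
`B_g(x, x) = i(h, g) · B_h(x, x)` for all `x ∈ h`. -/
theorem dynkin_index_additive
    {g₃ : Type*} [LieRing g₃] [LieAlgebra ℂ g₃] [FiniteDimensional ℂ g₃]
    [LieAlgebra.IsSimple ℂ g₃]
    (g₁ g₂ : LieSubalgebra ℂ g₃) (h12 : g₁ ≤ g₂)
    [LieAlgebra.IsSimple ℂ g₁]
    (m : ℕ) (I : Fin m → LieIdeal ℂ g₂)
    (hIsimple : ∀ i, LieAlgebra.IsSimple ℂ (I i))
    -- the projections onto the simple ideals, decomposing `g₂` as their direct sum
    (π : Fin m → (g₂ →ₗ[ℂ] g₂))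
    (hπmem : ∀ i x, π i x ∈ I i)
    (hπsum : ∀ x : g₂, ∑ i, π i x = x)
    (hπorth : ∀ i j, i ≠ j → ∀ x, π i (π j x) = 0)
    (hπlie : ∀ i (x y : g₂), π i ⁅x, y⁆ = ⁅π i x, π i y⁆)
    -- invariant symmetric bilinear forms on `g₁`, on each ideal `g₂^i`, and on `g₃`
    (B₁ : LinearMap.BilinForm ℂ g₁) (B₂ : Fin m → LinearMap.BilinForm ℂ g₂)
    (B₃ : LinearMap.BilinForm ℂ g₃)
    (hB₁symm : ∀ x y, B₁ x y = B₁ y x)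
    (hB₁inv : ∀ z x y : g₁, B₁ ⁅z, x⁆ y + B₁ x ⁅z, y⁆ = 0)
    (hB₁ne : ∃ x, B₁ x x ≠ 0)
    (hB₂symm : ∀ i, ∀ x y, B₂ i x y = B₂ i y x)
    (hB₂inv : ∀ i, ∀ z x y : g₂, B₂ i ⁅z, x⁆ y + B₂ i x ⁅z, y⁆ = 0)
    (hB₂ne : ∀ i, ∃ x ∈ I i, B₂ i x x ≠ 0)
    (hB₃symm : ∀ x y, B₃ x y = B₃ y x)
    (hB₃inv : ∀ z x y : g₃, B₃ ⁅z, x⁆ y + B₃ x ⁅z, y⁆ = 0)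
    (hB₃ne : ∃ x, B₃ x x ≠ 0)
    -- the Dynkin indices
    (i₁₃ : ℂ) (c d : Fin m → ℂ)
    (hi₁₃ : ∀ x : g₁, B₃ (x : g₃) (x : g₃) = i₁₃ * B₁ x x)
    (hc : ∀ i, ((∀ x : g₁, π i (⟨(x : g₃), h12 x.2⟩ : g₂) = 0) ∧ c i = 0) ∨
      (∀ x : g₁, B₂ i (π i (⟨(x : g₃), h12 x.2⟩ : g₂)) (π i (⟨(x : g₃), h12 x.2⟩ : g₂))
        = c i * B₁ x x))
    (hd : ∀ i, ∀ x : g₂, x ∈ I i → B₃ (x : g₃) (x : g₃) = d i * B₂ i x x) :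
    i₁₃ = ∑ i, c i * d i := by
  classical
  -- idempotence on ranges
  have hidem : ∀ i (z : g₂), π i (π i z) = π i z := by
    intro i z
    have h := hπsum (π i z)
    rwa [Finset.sum_eq_single i (fun j _ hji => hπorth j i hji z) (by simp)] at h
  -- components with distinct indices commute
  have hcomm : ∀ i j, i ≠ j → ∀ z w : g₂, ⁅π i z, π j w⁆ = 0 := by
    intro i j hij z w
    have h := hπsum ⁅π i z, π j w⁆
    rw [← h]
    apply Finset.sum_eq_zero
    intro k _
    rw [hπlie]
    rcases eq_or_ne k i with rfl | hki
    · rw [hπorth k j hij, lie_zero]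
    · rw [hπorth k i hki, zero_lie]
  have hfix : ∀ i (z w : g₂), ⁅z, π i w⁆ = ⁅π i z, π i w⁆ := by
    intro i z w
    have h := hπsum ⁅z, π i w⁆
    rw [← h, Finset.sum_eq_single i (fun j _ hji => by
      rw [hπlie, hπorth j i hji, lie_zero]) (by simp)]
    rw [hπlie, hidem]
  -- dichotomy: either π i ≡ 0 or π i fixes I i pointwise
  have hdich : ∀ i, (∀ z : g₂, π i z = 0) ∨ (∀ a : g₂, a ∈ I i → π i a = a) := by
    intro i
    let K : LieIdeal ℂ (I i) :=
      { carrier := {a : I i | π i (a : g₂) = (a : g₂)}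
        add_mem' := fun {a b} ha hb => by
          simp only [Set.mem_setOf_eq] at *
          rw [show ((a + b : I i) : g₂) = (a : g₂) + (b : g₂) from rfl, map_add, ha, hb]
        zero_mem' := by
          simp only [Set.mem_setOf_eq]
          rw [show ((0 : I i) : g₂) = 0 from rfl, map_zero]
        smul_mem' := fun t a ha => by
          simp only [Set.mem_setOf_eq] at *
          rw [show ((t • a : I i) : g₂) = t • (a : g₂) from rfl, map_smul, ha]
        lie_mem := fun {z a} ha => by
          simp only [Set.mem_setOf_eq] at *
          have hco : ((⁅z, a⁆ : I i) : g₂) = ⁅(z : g₂), (a : g₂)⁆ := rfl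
          rw [hco, ← ha, hfix i (z : g₂) (a : g₂), hπlie, hidem, hidem] }
    rcases (hIsimple i).eq_bot_or_eq_top K with hK | hK
    · left
      intro z
      have hmem : (⟨π i z, hπmem i z⟩ : I i) ∈ K := hidem i z
      rw [hK, LieSubmodule.mem_bot] at hmem
      exact congrArg Subtype.val hmem
    · right
      intro a ha
      have hmem : (⟨a, ha⟩ : I i) ∈ K := by rw [hK]; exact LieSubmodule.mem_top _
      exact hmem
  -- simple algebras are perfect
  have hder : ∀ i, (⁅(⊤ : LieIdeal ℂ (I i)), (⊤ : LieIdeal ℂ (I i))⁆ : LieIdeal ℂ (I i)) = ⊤ := by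
    intro i
    rcases (hIsimple i).eq_bot_or_eq_top (⁅(⊤ : LieIdeal ℂ (I i)), (⊤ : LieIdeal ℂ (I i))⁆ : LieIdeal ℂ (I i)) with h | h
    · exfalso
      apply (hIsimple i).non_abelian
      constructor
      intro a b
      have hm : ⁅a, b⁆ ∈ (⁅(⊤ : LieIdeal ℂ (I i)), (⊤ : LieIdeal ℂ (I i))⁆ : LieIdeal ℂ (I i)) :=
        LieSubmodule.lie_mem_lie (LieSubmodule.mem_top a) (LieSubmodule.mem_top b)
      rw [h, LieSubmodule.mem_bot] at hm
      exact hm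
    · exact h
  obtain ⟨x₀, hx₀⟩ := hB₁ne
  have key : ∀ x : g₁, B₃ (x : g₃) (x : g₃) = (∑ i, c i * d i) * B₁ x x := by
    intro x
    set y : g₂ := (⟨(x : g₃), h12 x.2⟩ : g₂) with hy
    have hx3 : (x : g₃) = (y : g₃) := rfl
    have hsum : (y : g₃) = ∑ i, ((π i y : g₂) : g₃) := by
      conv_lhs => rw [← hπsum y]
      simp
    -- cross terms vanish
    have hcross : ∀ i j, i ≠ j → B₃ ((π i y : g₂) : g₃) ((π j y : g₂) : g₃) = 0 := by
      intro i j hij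
      rcases hdich i with h0 | hfull
      · rw [h0 y]; simp
      · have hmem0 : (⟨π i y, hπmem i y⟩ : I i) ∈
            (⁅(⊤ : LieIdeal ℂ (I i)), (⊤ : LieIdeal ℂ (I i))⁆ : LieIdeal ℂ (I i)) := by
          rw [hder i]; exact LieSubmodule.mem_top _
        have hmem : (⟨π i y, hπmem i y⟩ : I i) ∈ Submodule.span ℂ
            {z : I i | ∃ u ∈ (⊤ : LieIdeal ℂ (I i)), ∃ v ∈ (⊤ : LieIdeal ℂ (I i)), ⁅u, v⁆ = z} := by
          rw [← LieSubmodule.lieIdeal_oper_eq_linear_span']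
          exact hmem0
        refine Submodule.span_induction
          (p := fun (z : I i) _ => B₃ ((z : g₂) : g₃) ((π j y : g₂) : g₃) = 0)
          ?_ ?_ ?_ ?_ hmem
        · intro z hz
          obtain ⟨a, -, b, -, rfl⟩ := hz
          show B₃ (((⁅a, b⁆ : I i) : g₂) : g₃) ((π j y : g₂) : g₃) = 0
          have hco : (((⁅a, b⁆ : I i) : g₂) : g₃) = ⁅((a : g₂) : g₃), ((b : g₂) : g₃)⁆ := rfl
          rw [hco]
          have hinv := hB₃inv ((a : g₂) : g₃) ((b : g₂) : g₃) ((π j y : g₂) : g₃)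
          have hzero : ⁅((a : g₂) : g₃), ((π j y : g₂) : g₃)⁆ = 0 := by
            have hz2 : ⁅(a : g₂), π j y⁆ = 0 := by
              rw [← hfull (a : g₂) a.2, hcomm i j hij]
            calc ⁅((a : g₂) : g₃), ((π j y : g₂) : g₃)⁆
                = ((⁅(a : g₂), π j y⁆ : g₂) : g₃) := rfl
              _ = 0 := by rw [hz2]; rfl
          rw [hzero] at hinv
          simpa using hinv
        · show B₃ (((0 : I i) : g₂) : g₃) ((π j y : g₂) : g₃) = 0
          rw [show (((0 : I i) : g₂) : g₃) = 0 from rfl, map_zero, LinearMap.zero_apply]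
        · intro z w _ _ hz hw
          show B₃ (((z + w : I i) : g₂) : g₃) ((π j y : g₂) : g₃) = 0
          rw [show (((z + w : I i) : g₂) : g₃) = ((z : g₂) : g₃) + ((w : g₂) : g₃) from rfl,
            map_add, LinearMap.add_apply, hz, hw, add_zero]
        · intro t z _ hz
          show B₃ (((t • z : I i) : g₂) : g₃) ((π j y : g₂) : g₃) = 0
          rw [show (((t • z : I i) : g₂) : g₃) = t • ((z : g₂) : g₃) from rfl,
            map_smul, LinearMap.smul_apply, hz, smul_zero]
    -- diagonal terms
    have hdiag : ∀ i, B₃ ((π i y : g₂) : g₃) ((π i y : g₂) : g₃) = c i * d i * B₁ x x := by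
      intro i
      rw [hd i _ (hπmem i y)]
      rcases hc i with ⟨h0, hc0⟩ | h
      · rw [show π i y = 0 from h0 x, hc0]; simp
      · rw [show B₂ i (π i y) (π i y) = c i * B₁ x x from h x]; ring
    calc B₃ (x : g₃) (x : g₃)
        = ∑ i, ∑ j, B₃ ((π i y : g₂) : g₃) ((π j y : g₂) : g₃) := by
          rw [hx3, hsum]
          simp only [map_sum, LinearMap.coe_sum, Finset.sum_apply]
          exact Finset.sum_comm
      _ = ∑ i, B₃ ((π i y : g₂) : g₃) ((π i y : g₂) : g₃) := by
          refine Finset.sum_congr rfl fun i _ => ?_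
          exact Finset.sum_eq_single i (fun j _ hji => hcross i j (Ne.symm hji)) (by simp)
      _ = ∑ i, c i * d i * B₁ x x := Finset.sum_congr rfl fun i _ => hdiag i
      _ = (∑ i, c i * d i) * B₁ x x := by rw [Finset.sum_mul]
  have h1 := hi₁₃ x₀
  rw [key x₀] at h1
  exact mul_right_cancel₀ hx₀ h1.symm
end
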